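/- arXiv:1405.6157 — 2 statements merged into one kernel-verified Lean document; each statement's English description precedes it below -/
import Mathlib

section
/- Let (P,G,B) be a transversal design TD(3,α) with α ≥ 7. Then there exists a set of 2α + 2 distinct blocks of B whose union contains at most 2α + 1 points. -/
/-- A transversal design `TD(ℓ, h)`: `Gr` is a partition of the point set `P`
(of size `ℓh`) into `ℓ` groups of size `h`; `B` is a collection of blocks,
each an `ℓ`-subset of `P` meeting every group in exactly one point, such that
any pair of points from different groups lies in exactly one block. -/
structure IsTransversalDesign {P : Type*} [Fintype P] [DecidableEq P]
    (ℓ h : ℕ) (Gr : Finset (Finset P)) (B : Finset (Finset P)) : Prop where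
  card_points : Fintype.card P = ℓ * h
  card_groups : Gr.card = ℓ
  group_card : ∀ g ∈ Gr, g.card = h
  groups_disjoint : ∀ g₁ ∈ Gr, ∀ g₂ ∈ Gr, g₁ ≠ g₂ → Disjoint g₁ g₂
  groups_cover : ∀ p : P, ∃ g ∈ Gr, p ∈ g
  block_card : ∀ b ∈ B, b.card = ℓ
  block_meets_group : ∀ b ∈ B, ∀ g ∈ Gr, (b ∩ g).card = 1
  pairs_covered : ∀ p q : P, ∀ g₁ ∈ Gr, ∀ g₂ ∈ Gr, g₁ ≠ g₂ → p ∈ g₁ → q ∈ g₂ →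
    ∃! b, b ∈ B ∧ p ∈ b ∧ q ∈ b

/-!
Fix the groups `g₁, g₂, g₃`, points `q ∈ g₂`, `r ∈ g₃`, and let `w ∈ g₁` lie on the block
through `q` and `r`. Each point of `g₁` lies on `α` blocks, one through each point of `g₂`;
for `w` exactly one of them meets `{q, r}`, for any other point at most two. So for two further
points `y, z ∈ g₁`, the blocks through `w`, `y` or `z` avoiding `q` and `r` number at least
`(α - 1) + 2 (α - 2) ≥ 2α + 2` when `α ≥ 7`, and they all lie inside the `2α + 1` points
`{w, y, z} ∪ (g₂ \ {q}) ∪ (g₃ \ {r})`.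
-/

open Finset

namespace IsTransversalDesign

variable {P : Type*} [Fintype P] [DecidableEq P] {ℓ h : ℕ} {Gr B : Finset (Finset P)}
  {g₁ g₂ g₃ b : Finset P} {p q r : P}

theorem eq_of_mem_block_of_mem_group (hTD : IsTransversalDesign ℓ h Gr B) (hb : b ∈ B)
    (hg : g₁ ∈ Gr) (hpb : p ∈ b) (hpg : p ∈ g₁) (hqb : q ∈ b) (hqg : q ∈ g₁) : p = q :=
  card_le_one.1 (hTD.block_meets_group b hb g₁ hg).le p (mem_inter.2 ⟨hpb, hpg⟩) q
    (mem_inter.2 ⟨hqb, hqg⟩)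

theorem exists_mem_block_of_mem_group (hTD : IsTransversalDesign ℓ h Gr B) (hb : b ∈ B)
    (hg : g₁ ∈ Gr) : ∃ p ∈ b, p ∈ g₁ := by
  obtain ⟨p, hp⟩ := card_pos.1 (hTD.block_meets_group b hb g₁ hg ▸ one_pos)
  exact ⟨p, (mem_inter.1 hp).1, (mem_inter.1 hp).2⟩

theorem card_filter_mem_and_mem (hTD : IsTransversalDesign ℓ h Gr B) (hg₁ : g₁ ∈ Gr)
    (hg₂ : g₂ ∈ Gr) (h₁₂ : g₁ ≠ g₂) (hp : p ∈ g₁) (hq : q ∈ g₂) :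
    #{b ∈ B | p ∈ b ∧ q ∈ b} = 1 := by
  obtain ⟨b, hb, hb_unique⟩ := hTD.pairs_covered p q g₁ hg₁ g₂ hg₂ h₁₂ hp hq
  refine card_eq_one.2 ⟨b, eq_singleton_iff_unique_mem.2 ⟨mem_filter.2 hb, fun c hc => ?_⟩⟩
  exact hb_unique c (mem_filter.1 hc)

theorem card_filter_mem (hTD : IsTransversalDesign ℓ h Gr B) (hg₁ : g₁ ∈ Gr) (hg₂ : g₂ ∈ Gr)
    (h₁₂ : g₁ ≠ g₂) (hp : p ∈ g₁) : #{b ∈ B | p ∈ b} = h := by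
  have key := card_mul_eq_card_mul (s := {b ∈ B | p ∈ b}) (t := g₂) (fun b q => q ∈ b)
    (m := 1) (n := 1) (fun b hb => ?_) (fun q hq => ?_)
  · rwa [mul_one, mul_one, hTD.group_card g₂ hg₂] at key
  · rw [bipartiteAbove, filter_mem_eq_inter, inter_comm]
    exact hTD.block_meets_group b (mem_filter.1 hb).1 g₂ hg₂
  · rw [bipartiteBelow, filter_filter]
    exact hTD.card_filter_mem_and_mem hg₁ hg₂ h₁₂ hp hq

theorem sub_le_card_filter_not_mem (hTD : IsTransversalDesign ℓ h Gr B) (hg₁ : g₁ ∈ Gr)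
    (hg₂ : g₂ ∈ Gr) (h₁₂ : g₁ ≠ g₂) (hp : p ∈ g₁) {k : ℕ}
    (hk : #{b ∈ B | p ∈ b ∧ (q ∈ b ∨ r ∈ b)} ≤ k) :
    h - k ≤ #{b ∈ B | p ∈ b ∧ q ∉ b ∧ r ∉ b} := by
  have split := card_filter_add_card_filter_not (s := {b ∈ B | p ∈ b}) (fun b => q ∈ b ∨ r ∈ b)
  simp only [filter_filter, not_or] at split
  have := hTD.card_filter_mem hg₁ hg₂ h₁₂ hp
  omega

theorem sub_two_le_card_filter_not_mem (hTD : IsTransversalDesign ℓ h Gr B) (hg₁ : g₁ ∈ Gr)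
    (hg₂ : g₂ ∈ Gr) (hg₃ : g₃ ∈ Gr) (h₁₂ : g₁ ≠ g₂) (h₁₃ : g₁ ≠ g₃) (hp : p ∈ g₁)
    (hq : q ∈ g₂) (hr : r ∈ g₃) : h - 2 ≤ #{b ∈ B | p ∈ b ∧ q ∉ b ∧ r ∉ b} := by
  refine hTD.sub_le_card_filter_not_mem hg₁ hg₂ h₁₂ hp ?_
  simp only [and_or_left, filter_or]
  calc #({b ∈ B | p ∈ b ∧ q ∈ b} ∪ {b ∈ B | p ∈ b ∧ r ∈ b})
      ≤ #{b ∈ B | p ∈ b ∧ q ∈ b} + #{b ∈ B | p ∈ b ∧ r ∈ b} := card_union_le _ _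
    _ = 2 := by
      rw [hTD.card_filter_mem_and_mem hg₁ hg₂ h₁₂ hp hq,
        hTD.card_filter_mem_and_mem hg₁ hg₃ h₁₃ hp hr]

theorem sub_one_le_card_filter_not_mem (hTD : IsTransversalDesign ℓ h Gr B) (hg₁ : g₁ ∈ Gr)
    (hg₂ : g₂ ∈ Gr) (hg₃ : g₃ ∈ Gr) (h₁₂ : g₁ ≠ g₂) (h₁₃ : g₁ ≠ g₃) (hp : p ∈ g₁)
    (hq : q ∈ g₂) (hr : r ∈ g₃) {b₀ : Finset P} (hb₀ : b₀ ∈ B) (hpb₀ : p ∈ b₀) (hqb₀ : q ∈ b₀)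
    (hrb₀ : r ∈ b₀) : h - 1 ≤ #{b ∈ B | p ∈ b ∧ q ∉ b ∧ r ∉ b} := by
  refine hTD.sub_le_card_filter_not_mem hg₁ hg₂ h₁₂ hp (card_le_one.2 fun b hb c hc => ?_)
  suffices ∀ b ∈ {b ∈ B | p ∈ b ∧ (q ∈ b ∨ r ∈ b)}, b = b₀ from (this b hb).trans (this c hc).symm
  intro b hb
  obtain ⟨hbB, hpb, hqb | hrb⟩ := mem_filter.1 hb
  · exact (hTD.pairs_covered p q g₁ hg₁ g₂ hg₂ h₁₂ hp hq).unique ⟨hbB, hpb, hqb⟩ ⟨hb₀, hpb₀, hqb₀⟩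
  · exact (hTD.pairs_covered p r g₁ hg₁ g₃ hg₃ h₁₃ hp hr).unique ⟨hbB, hpb, hrb⟩ ⟨hb₀, hpb₀, hrb₀⟩

theorem subset_insert_erase_union_erase (hTD : IsTransversalDesign ℓ h Gr B)
    (hGr : Gr = {g₁, g₂, g₃}) (hb : b ∈ B) (hpb : p ∈ b) (hpg : p ∈ g₁) (hqb : q ∉ b)
    (hrb : r ∉ b) : b ⊆ insert p (g₂.erase q ∪ g₃.erase r) := by
  intro x hxb
  obtain ⟨g, hg, hxg⟩ := hTD.groups_cover x
  have hg' := hg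
  rw [hGr, mem_insert, mem_insert, mem_singleton] at hg'
  rcases hg' with rfl | rfl | rfl
  · exact mem_insert.2 (Or.inl (hTD.eq_of_mem_block_of_mem_group hb hg hxb hxg hpb hpg))
  · exact mem_insert_of_mem (mem_union_left _ (mem_erase.2 ⟨fun h => hqb (h ▸ hxb), hxg⟩))
  · exact mem_insert_of_mem (mem_union_right _ (mem_erase.2 ⟨fun h => hrb (h ▸ hxb), hxg⟩))

theorem card_biUnion_filter_mem (hTD : IsTransversalDesign ℓ h Gr B) (hg₁ : g₁ ∈ Gr)
    {X : Finset P} (hX : X ⊆ g₁) (Q : Finset P → Prop) [DecidablePred Q] :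
    #(X.biUnion fun x => {b ∈ B | x ∈ b ∧ Q b}) = ∑ x ∈ X, #{b ∈ B | x ∈ b ∧ Q b} := by
  refine card_biUnion fun x hx y hy hxy => disjoint_left.2 fun b hbx hby => hxy ?_
  obtain ⟨hbB, hxb, -⟩ := mem_filter.1 hbx
  exact hTD.eq_of_mem_block_of_mem_group hbB hg₁ hxb (hX hx) (mem_filter.1 hby).2.1 (hX hy)

theorem sup_biUnion_filter_subset (hTD : IsTransversalDesign ℓ h Gr B)
    (hGr : Gr = {g₁, g₂, g₃}) {X : Finset P} (hX : X ⊆ g₁) :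
    (X.biUnion fun x => {b ∈ B | x ∈ b ∧ q ∉ b ∧ r ∉ b}).sup id ⊆
      X ∪ (g₂.erase q ∪ g₃.erase r) := by
  refine Finset.sup_le fun b hb => ?_
  obtain ⟨x, hx, hb⟩ := mem_biUnion.1 hb
  obtain ⟨hbB, hxb, hqb, hrb⟩ := mem_filter.1 hb
  refine (hTD.subset_insert_erase_union_erase hGr hbB hxb (hX hx) hqb hrb).trans ?_
  exact insert_subset (mem_union_left _ hx) subset_union_right

theorem card_sup_biUnion_filter_le (hTD : IsTransversalDesign ℓ h Gr B)
    (hGr : Gr = {g₁, g₂, g₃}) {X : Finset P} (hX : X ⊆ g₁) (hq : q ∈ g₂) (hr : r ∈ g₃) :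
    #((X.biUnion fun x => {b ∈ B | x ∈ b ∧ q ∉ b ∧ r ∉ b}).sup id) ≤ #X + 2 * (h - 1) := by
  have hg₂ : g₂ ∈ Gr := by simp [hGr]
  have hg₃ : g₃ ∈ Gr := by simp [hGr]
  calc _ ≤ #(X ∪ (g₂.erase q ∪ g₃.erase r)) :=
        card_le_card (hTD.sup_biUnion_filter_subset hGr hX)
    _ ≤ #X + (#(g₂.erase q) + #(g₃.erase r)) :=
        (card_union_le _ _).trans (Nat.add_le_add_left (card_union_le _ _) _)
    _ = #X + 2 * (h - 1) := by
      rw [card_erase_of_mem hq, card_erase_of_mem hr, hTD.group_card g₂ hg₂,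
        hTD.group_card g₃ hg₃]
      ring

end IsTransversalDesign

/-- In a `TD(3,α)` with `α ≥ 7`, there exist `2α + 2` distinct blocks whose
union contains at most `2α + 1` points. -/
theorem td3_hall_violation {P : Type*} [Fintype P] [DecidableEq P]
    (α : ℕ) (hα : 7 ≤ α) (Gr B : Finset (Finset P))
    (hTD : IsTransversalDesign 3 α Gr B) :
    ∃ S : Finset (Finset P), S ⊆ B ∧ S.card = 2 * α + 2 ∧
      (S.sup id).card ≤ 2 * α + 1 := by
  obtain ⟨g₁, g₂, g₃, h₁₂, h₁₃, h₂₃, hGr⟩ := card_eq_three.1 hTD.card_groups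
  obtain ⟨hg₁, hg₂, hg₃⟩ : g₁ ∈ Gr ∧ g₂ ∈ Gr ∧ g₃ ∈ Gr := by simp [hGr]
  obtain ⟨q, hq⟩ := card_pos.1 (hTD.group_card g₂ hg₂ ▸ (by omega : 0 < α))
  obtain ⟨r, hr⟩ := card_pos.1 (hTD.group_card g₃ hg₃ ▸ (by omega : 0 < α))
  obtain ⟨b₀, ⟨hb₀, hqb₀, hrb₀⟩, -⟩ := hTD.pairs_covered q r g₂ hg₂ g₃ hg₃ h₂₃ hq hr
  obtain ⟨w, hwb₀, hw⟩ := hTD.exists_mem_block_of_mem_group hb₀ hg₁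
  obtain ⟨Y, hY, hYcard⟩ := exists_subset_card_eq (s := g₁.erase w) (n := 2)
    (by rw [card_erase_of_mem hw, hTD.group_card g₁ hg₁]; omega)
  have hwY : w ∉ Y := fun h => (mem_erase.1 (hY h)).1 rfl
  have hX : insert w Y ⊆ g₁ := insert_subset hw (hY.trans (erase_subset w g₁))
  have hcount : 2 * α + 2 ≤ ∑ x ∈ insert w Y, #{b ∈ B | x ∈ b ∧ q ∉ b ∧ r ∉ b} := by
    rw [sum_insert hwY]
    have hw_count :=
      hTD.sub_one_le_card_filter_not_mem hg₁ hg₂ hg₃ h₁₂ h₁₃ hw hq hr hb₀ hwb₀ hqb₀ hrb₀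
    have hY_count := card_nsmul_le_sum Y _ (α - 2) fun y hy =>
      hTD.sub_two_le_card_filter_not_mem hg₁ hg₂ hg₃ h₁₂ h₁₃ (mem_of_mem_erase (hY hy)) hq hr
    rw [hYcard, smul_eq_mul] at hY_count
    omega
  rw [← hTD.card_biUnion_filter_mem hg₁ hX] at hcount
  obtain ⟨S, hS, hScard⟩ := exists_subset_card_eq hcount
  refine ⟨S, hS.trans (biUnion_subset.2 fun _ _ => filter_subset _ _), hScard, ?_⟩
  calc #(S.sup id) ≤ #(insert w Y) + 2 * (α - 1) :=
        (card_le_card (sup_mono hS)).trans (hTD.card_sup_biUnion_filter_le hGr hX hq hr)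
    _ = 2 * α + 1 := by rw [card_insert_of_notMem hwY, hYcard]; omega
end

section
/- Let (P,G,B) be a transversal design TD(3,5). Then for every 1 ≤ i ≤ 9 and every set of i distinct blocks of B, the union of these blocks contains at least i + 2 points; moreover, there exists a set of 10 distinct blocks of B whose union contains at most 11 points. Likewise, if (P,G,B) is a transversal design TD(3,4), then for every 1 ≤ i ≤ 8 and every set of i distinct blocks of B, the union of these blocks contains at least i + 2 points, and there exists a set of 9 distinct blocks of B whose union contains at most 10 points. -/
/-! Let `U` be the union of a set `S` of blocks of a `TD(3,h)` and `a, b, c` the sizes of the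
traces of `U` on the three groups. Two points in different groups lie on exactly one block, so
`#S ≤ ab, bc, ca`; inclusion–exclusion over the blocks meeting the third trace adds
`#S + ch ≤ ac + bc + (h - a)(h - b)`, and for `h ≤ 5`, `#S ≤ h + 4` these force
`a + b + c ≥ #S + 2`. Conversely, the blocks avoiding a point set `F` cover at most `3h - #F`
points, and inclusion–exclusion counts them: avoiding one point in each of two groups of a
`TD(3,4)` leaves 9 blocks, and avoiding two points of one group, one of a second and a point of
the third group off the two blocks through those leaves 10 blocks of a `TD(3,5)`. -/

open Finset

section FinsetCounting

variable {α : Type*} [DecidableEq α]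

lemma Finset.card_union_union_add_card_inter (X Y Z : Finset α) :
    #(X ∪ Y ∪ Z) + #(X ∩ Y) + #(X ∩ Z) + #(Y ∩ Z) = #X + #Y + #Z + #(X ∩ Y ∩ Z) := by
  have hXY := card_union_add_card_inter X Y
  have hXYZ := card_union_add_card_inter (X ∪ Y) Z
  have hZ := card_union_add_card_inter (X ∩ Z) (Y ∩ Z)
  rw [union_inter_distrib_right] at hXYZ
  rw [← inter_inter_distrib_right] at hZ
  omega

lemma Finset.card_inter_inter_add_card_le {X Y Z B : Finset α} (hZ : Z ⊆ B) :
    #(X ∩ Y ∩ Z) + #Z ≤ #(X ∩ Z) + #(Y ∩ Z) + #(B \ (X ∪ Y)) := by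
  have hXY := card_union_add_card_inter (X ∩ Z) (Y ∩ Z)
  have hsplit := card_inter_add_card_sdiff Z (X ∪ Y)
  rw [inter_comm] at hsplit
  have hout : #(Z \ (X ∪ Y)) ≤ #(B \ (X ∪ Y)) := card_le_card (sdiff_subset_sdiff hZ le_rfl)
  rw [← union_inter_distrib_right, ← inter_inter_distrib_right] at hXY
  omega

end FinsetCounting

section

variable {P : Type*} [DecidableEq P]

def blocksMeeting (B : Finset (Finset P)) (A : Finset P) : Finset (Finset P) :=
  {b ∈ B | (b ∩ A).Nonempty}

@[simp]
lemma mem_blocksMeeting {B : Finset (Finset P)} {A b : Finset P} :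
    b ∈ blocksMeeting B A ↔ b ∈ B ∧ (b ∩ A).Nonempty :=
  mem_filter

lemma blocksMeeting_subset (B : Finset (Finset P)) (A : Finset P) : blocksMeeting B A ⊆ B :=
  filter_subset _ _

lemma mem_blocksMeeting_singleton {B : Finset (Finset P)} {b : Finset P} {p : P} :
    b ∈ blocksMeeting B {p} ↔ b ∈ B ∧ p ∈ b := by
  simp [Finset.Nonempty]

lemma blocksMeeting_union (B : Finset (Finset P)) (A A' : Finset P) :
    blocksMeeting B (A ∪ A') = blocksMeeting B A ∪ blocksMeeting B A' := by
  simp only [blocksMeeting, inter_union_distrib_left, union_nonempty, filter_or]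

lemma blocksMeeting_empty (B : Finset (Finset P)) : blocksMeeting B ∅ = ∅ := by
  simp [blocksMeeting]

lemma card_sup_add_card_le [Fintype P] {S B : Finset (Finset P)} {F : Finset P}
    (hS : S ⊆ B \ blocksMeeting B F) : #(S.sup id) + #F ≤ Fintype.card P := by
  have hdisj : Disjoint (S.sup id) F := Finset.disjoint_sup_left.2 fun b hb => by
    obtain ⟨hbB, hbF⟩ := mem_sdiff.1 (hS hb)
    simpa [disjoint_iff_inter_eq_empty, ← not_nonempty_iff_eq_empty, hbB] using hbF
  rw [← card_union_of_disjoint hdisj]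
  exact card_le_univ _

lemma Nat.add_two_le_add_add_of_le_mul {h i a b c : ℕ} (hh : h ≤ 5) (hi : i ≤ h + 4)
    (ha : 1 ≤ a) (ha' : a ≤ h) (hb : 1 ≤ b) (hb' : b ≤ h) (hc : 1 ≤ c) (hc' : c ≤ h)
    (hab : i ≤ a * b) (hbc : i ≤ b * c) (hac : i ≤ a * c)
    (hkey : i + c * h ≤ a * c + b * c + (h - a) * (h - b)) :
    i + 2 ≤ a + b + c := by
  interval_cases h <;> interval_cases a <;> interval_cases b <;> interval_cases c <;> omega

namespace IsTransversalDesign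

variable [Fintype P] {ℓ h : ℕ} {Gr B : Finset (Finset P)}

lemma inter_eq_singleton (hTD : IsTransversalDesign ℓ h Gr B) {b g : Finset P} {p : P}
    (hb : b ∈ B) (hg : g ∈ Gr) (hpb : p ∈ b) (hpg : p ∈ g) : b ∩ g = {p} := by
  obtain ⟨x, hx⟩ := card_eq_one.1 (hTD.block_meets_group b hb g hg)
  have hp : p ∈ b ∩ g := mem_inter.2 ⟨hpb, hpg⟩
  rw [hx, mem_singleton] at hp
  rw [hx, hp]

lemma blocksMeeting_group (hTD : IsTransversalDesign ℓ h Gr B) {g : Finset P} (hg : g ∈ Gr) :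
    blocksMeeting B g = B :=
  filter_true_of_mem fun b hb => card_pos.1 (by rw [hTD.block_meets_group b hb g hg]; norm_num)

lemma card_inter_eq_ite (hTD : IsTransversalDesign ℓ h Gr B) {b g A : Finset P}
    (hb : b ∈ B) (hg : g ∈ Gr) (hA : A ⊆ g) :
    #(A ∩ b) = if (b ∩ A).Nonempty then 1 else 0 := by
  split_ifs with hbA
  · obtain ⟨p, hp⟩ := hbA
    rw [mem_inter] at hp
    have hAb : A ∩ b ⊆ {p} := by
      rw [← hTD.inter_eq_singleton hb hg hp.1 (hA hp.2), inter_comm]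
      exact inter_subset_inter_left hA
    rw [eq_singleton_iff_unique_mem.2
      ⟨mem_inter.2 ⟨hp.2, hp.1⟩, fun x hx => mem_singleton.1 (hAb hx)⟩, card_singleton]
  · rw [inter_comm, card_eq_zero, ← not_nonempty_iff_eq_empty]
    exact hbA

lemma card_inter_blocksMeeting_eq_sum (hTD : IsTransversalDesign ℓ h Gr B)
    (X : Finset (Finset P)) {g A : Finset P} (hg : g ∈ Gr) (hA : A ⊆ g) :
    #(X ∩ blocksMeeting B A) = ∑ p ∈ A, #(X ∩ blocksMeeting B {p}) := by
  -- double counting of incidences: a block meets `A ⊆ g` in at most one point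
  have hcount := sum_card_bipartiteAbove_eq_sum_card_bipartiteBelow
    (s := A) (t := X ∩ B) (r := fun p b => p ∈ b)
  simp only [bipartiteAbove, bipartiteBelow, filter_mem_eq_inter] at hcount
  simp only [blocksMeeting, inter_filter, card_filter]
  rw [sum_congr rfl fun b hb => hTD.card_inter_eq_ite (mem_inter.1 hb).2 hg hA] at hcount
  rw [← hcount]
  refine sum_congr rfl fun p _ => ?_
  rw [card_filter]
  simp [Finset.Nonempty]

lemma card_blocksMeeting_singleton_inter (hTD : IsTransversalDesign ℓ h Gr B)
    {g g' : Finset P} {p q : P} (hg : g ∈ Gr) (hg' : g' ∈ Gr) (hgg' : g ≠ g')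
    (hp : p ∈ g) (hq : q ∈ g') :
    #(blocksMeeting B {p} ∩ blocksMeeting B {q}) = 1 := by
  obtain ⟨b, hb, hunique⟩ := hTD.pairs_covered p q g hg g' hg' hgg' hp hq
  refine card_eq_one.2 ⟨b, ext fun b' => ?_⟩
  simp only [mem_inter, mem_blocksMeeting_singleton, mem_singleton]
  constructor
  · rintro ⟨⟨hb', hpb'⟩, -, hqb'⟩
    exact hunique b' ⟨hb', hpb', hqb'⟩
  · rintro rfl
    exact ⟨⟨hb.1, hb.2.1⟩, hb.1, hb.2.2⟩

theorem card_blocksMeeting_inter (hTD : IsTransversalDesign ℓ h Gr B)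
    {g g' A C : Finset P} (hg : g ∈ Gr) (hg' : g' ∈ Gr) (hgg' : g ≠ g')
    (hA : A ⊆ g) (hC : C ⊆ g') :
    #(blocksMeeting B A ∩ blocksMeeting B C) = #A * #C := by
  have hstar : ∀ p ∈ A, #(blocksMeeting B C ∩ blocksMeeting B {p}) = #C := fun p hp => by
    rw [inter_comm, hTD.card_inter_blocksMeeting_eq_sum _ hg' hC,
      sum_congr rfl fun q hq =>
        hTD.card_blocksMeeting_singleton_inter hg hg' hgg' (hA hp) (hC hq),
      sum_const, smul_eq_mul, mul_one]
  rw [inter_comm, hTD.card_inter_blocksMeeting_eq_sum _ hg hA, sum_congr rfl hstar, sum_const,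
    smul_eq_mul]

theorem card_blocksMeeting (hTD : IsTransversalDesign ℓ h Gr B)
    {g g' A : Finset P} (hg : g ∈ Gr) (hg' : g' ∈ Gr) (hgg' : g ≠ g') (hA : A ⊆ g) :
    #(blocksMeeting B A) = #A * h := by
  have := hTD.card_blocksMeeting_inter hg hg' hgg' hA subset_rfl
  rwa [hTD.blocksMeeting_group hg', inter_eq_left.2 (blocksMeeting_subset B A),
    hTD.group_card g' hg'] at this

theorem card_blocks (hTD : IsTransversalDesign ℓ h Gr B)
    {g g' : Finset P} (hg : g ∈ Gr) (hg' : g' ∈ Gr) (hgg' : g ≠ g') : #B = h * h := by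
  rw [← hTD.blocksMeeting_group hg, hTD.card_blocksMeeting hg hg' hgg' subset_rfl,
    hTD.group_card g hg]

lemma sdiff_blocksMeeting (hTD : IsTransversalDesign ℓ h Gr B) {g A : Finset P}
    (hg : g ∈ Gr) (hA : A ⊆ g) : B \ blocksMeeting B A = blocksMeeting B (g \ A) := by
  ext b
  simp only [mem_sdiff, mem_blocksMeeting]
  refine and_congr_right fun hb => ?_
  obtain ⟨x, hx⟩ := card_eq_one.1 (hTD.block_meets_group b hb g hg)
  have hxg : x ∈ g := (mem_inter.1 (hx ▸ mem_singleton_self x)).2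
  rw [← inter_sdiff_assoc, hx, ← inter_eq_right.2 hA, ← inter_assoc, hx]
  simp [Finset.Nonempty, hb, hxg]

theorem card_sdiff_blocksMeeting_union (hTD : IsTransversalDesign ℓ h Gr B)
    {g₁ g₂ A A' : Finset P} (hg₁ : g₁ ∈ Gr) (hg₂ : g₂ ∈ Gr) (h₁₂ : g₁ ≠ g₂)
    (hA : A ⊆ g₁) (hA' : A' ⊆ g₂) :
    #(B \ (blocksMeeting B A ∪ blocksMeeting B A')) = (h - #A) * (h - #A') := by
  rw [sdiff_union_distrib, hTD.sdiff_blocksMeeting hg₁ hA, hTD.sdiff_blocksMeeting hg₂ hA',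
    hTD.card_blocksMeeting_inter hg₁ hg₂ h₁₂ sdiff_subset sdiff_subset,
    card_sdiff_of_subset hA, card_sdiff_of_subset hA', hTD.group_card g₁ hg₁,
    hTD.group_card g₂ hg₂]

theorem card_blocksMeeting_inter_inter_add_le (hTD : IsTransversalDesign ℓ h Gr B)
    {g₁ g₂ g₃ A A' C : Finset P} (hg₁ : g₁ ∈ Gr) (hg₂ : g₂ ∈ Gr) (hg₃ : g₃ ∈ Gr)
    (h₁₂ : g₁ ≠ g₂) (h₁₃ : g₁ ≠ g₃) (h₂₃ : g₂ ≠ g₃)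
    (hA : A ⊆ g₁) (hA' : A' ⊆ g₂) (hC : C ⊆ g₃) :
    #(blocksMeeting B A ∩ blocksMeeting B A' ∩ blocksMeeting B C) + #C * h
      ≤ #A * #C + #A' * #C + (h - #A) * (h - #A') := by
  -- the blocks meeting `C` but neither `A` nor `A'` meet both `g₁ \ A` and `g₂ \ A'`
  have := card_inter_inter_add_card_le (X := blocksMeeting B A) (Y := blocksMeeting B A')
    (blocksMeeting_subset B C)
  rwa [hTD.card_blocksMeeting hg₃ hg₁ h₁₃.symm hC,
    hTD.card_blocksMeeting_inter hg₁ hg₃ h₁₃ hA hC,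
    hTD.card_blocksMeeting_inter hg₂ hg₃ h₂₃ hA' hC,
    hTD.card_sdiff_blocksMeeting_union hg₁ hg₂ h₁₂ hA hA'] at this

lemma card_eq_sum_card_inter_groups (hTD : IsTransversalDesign ℓ h Gr B) (U : Finset P) :
    #U = ∑ g ∈ Gr, #(g ∩ U) := by
  rw [← card_biUnion]
  · congr 1
    ext x
    simp only [mem_biUnion, mem_inter]
    obtain ⟨g, hg, hx⟩ := hTD.groups_cover x
    exact ⟨fun hxU => ⟨g, hg, hx, hxU⟩, fun ⟨_, _, _, hxU⟩ => hxU⟩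
  · exact fun g hg g' hg' hgg' =>
      (hTD.groups_disjoint g hg g' hg' hgg').mono inter_subset_left inter_subset_left

lemma exists_mem_inter_blocksMeeting_eq_empty (hTD : IsTransversalDesign ℓ h Gr B)
    {X : Finset (Finset P)} {g : Finset P} (hg : g ∈ Gr) (hX : #X < h) :
    ∃ t ∈ g, X ∩ blocksMeeting B {t} = ∅ := by
  have hsum : ∑ t ∈ g, #(X ∩ blocksMeeting B {t}) < ∑ _t ∈ g, 1 := by
    rw [← hTD.card_inter_blocksMeeting_eq_sum X hg subset_rfl, hTD.blocksMeeting_group hg,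
      sum_const, hTD.group_card g hg, smul_eq_mul, mul_one]
    exact (card_le_card inter_subset_left).trans_lt hX
  obtain ⟨t, ht, hlt⟩ := exists_lt_of_sum_lt hsum
  exact ⟨t, ht, card_eq_zero.1 (by omega)⟩

lemma subset_blocksMeeting_inter_sup (hTD : IsTransversalDesign ℓ h Gr B)
    {S : Finset (Finset P)} (hS : S ⊆ B) {g : Finset P} (hg : g ∈ Gr) :
    S ⊆ blocksMeeting B (g ∩ S.sup id) := by
  intro b hb
  obtain ⟨x, hx⟩ := card_eq_one.1 (hTD.block_meets_group b (hS hb) g hg)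
  obtain ⟨hxb, hxg⟩ := mem_inter.1 (hx ▸ mem_singleton_self x)
  exact mem_blocksMeeting.2
    ⟨hS hb, x, mem_inter.2 ⟨hxb, mem_inter.2 ⟨hxg, le_sup (f := id) hb hxb⟩⟩⟩

theorem card_add_two_le_card_sup (hTD : IsTransversalDesign 3 h Gr B) (hh : h ≤ 5)
    {S : Finset (Finset P)} (hS : S ⊆ B) (hS₁ : 1 ≤ #S) (hSh : #S ≤ h + 4) :
    #S + 2 ≤ #(S.sup id) := by
  obtain ⟨g₁, g₂, g₃, h₁₂, h₁₃, h₂₃, hGr⟩ := card_eq_three.1 hTD.card_groups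
  have hg₁ : g₁ ∈ Gr := by simp [hGr]
  have hg₂ : g₂ ∈ Gr := by simp [hGr]
  have hg₃ : g₃ ∈ Gr := by simp [hGr]
  set U := S.sup id
  have hmeet : ∀ {g}, g ∈ Gr → S ⊆ blocksMeeting B (g ∩ U) :=
    hTD.subset_blocksMeeting_inter_sup hS
  have hpos : ∀ {g}, g ∈ Gr → 1 ≤ #(g ∩ U) := fun hg => by
    obtain ⟨b, hb⟩ := card_pos.1 hS₁
    obtain ⟨-, hbU⟩ := mem_blocksMeeting.1 (hmeet hg hb)
    exact card_pos.2 (hbU.mono inter_subset_right)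
  have hle : ∀ {g}, g ∈ Gr → #(g ∩ U) ≤ h := fun hg =>
    (card_le_card inter_subset_left).trans (hTD.group_card _ hg).le
  have hpair : ∀ {g g'}, g ∈ Gr → g' ∈ Gr → g ≠ g' → #S ≤ #(g ∩ U) * #(g' ∩ U) :=
    fun hg hg' hgg' => (card_le_card (subset_inter (hmeet hg) (hmeet hg'))).trans
      (hTD.card_blocksMeeting_inter hg hg' hgg' inter_subset_left inter_subset_left).le
  have hkey := (Nat.add_le_add_right (card_le_card
      (subset_inter (subset_inter (hmeet hg₁) (hmeet hg₂)) (hmeet hg₃))) _).trans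
    (hTD.card_blocksMeeting_inter_inter_add_le hg₁ hg₂ hg₃ h₁₂ h₁₃ h₂₃
      inter_subset_left inter_subset_left inter_subset_left)
  have hU : #U = #(g₁ ∩ U) + #(g₂ ∩ U) + #(g₃ ∩ U) := by
    rw [hTD.card_eq_sum_card_inter_groups, hGr, sum_insert (by simp [h₁₂, h₁₃]),
      sum_pair h₂₃, add_assoc]
  rw [hU]
  exact Nat.add_two_le_add_add_of_le_mul hh hSh (hpos hg₁) (hle hg₁) (hpos hg₂) (hle hg₂)
    (hpos hg₃) (hle hg₃) (hpair hg₁ hg₂ h₁₂) (hpair hg₂ hg₃ h₂₃) (hpair hg₁ hg₃ h₁₃) hkey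

theorem exists_card_sup_add_le (hTD : IsTransversalDesign 3 h Gr B)
    {g₁ g₂ g₃ A A' C : Finset P} (hg₁ : g₁ ∈ Gr) (hg₂ : g₂ ∈ Gr) (hg₃ : g₃ ∈ Gr)
    (h₁₂ : g₁ ≠ g₂) (h₁₃ : g₁ ≠ g₃) (h₂₃ : g₂ ≠ g₃)
    (hA : A ⊆ g₁) (hA' : A' ⊆ g₂) (hC : C ⊆ g₃)
    (hN : blocksMeeting B A ∩ blocksMeeting B A' ∩ blocksMeeting B C = ∅) {k : ℕ}
    (hk : k + (#A + #A' + #C) * h ≤ h * h + #A * #A' + #A * #C + #A' * #C) :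
    ∃ S ⊆ B, #S = k ∧ #(S.sup id) + (#A + #A' + #C) ≤ 3 * h := by
  have hdisj : ∀ {g g' X Y : Finset P}, g ∈ Gr → g' ∈ Gr → g ≠ g' → X ⊆ g → Y ⊆ g' →
      Disjoint X Y := fun hg hg' hgg' hX hY =>
    (hTD.groups_disjoint _ hg _ hg' hgg').mono hX hY
  have hF : #(A ∪ A' ∪ C) = #A + #A' + #C := by
    rw [card_union_of_disjoint (disjoint_union_left.2
        ⟨hdisj hg₁ hg₃ h₁₃ hA hC, hdisj hg₂ hg₃ h₂₃ hA' hC⟩),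
      card_union_of_disjoint (hdisj hg₁ hg₂ h₁₂ hA hA')]
  have hMF := card_union_union_add_card_inter
    (blocksMeeting B A) (blocksMeeting B A') (blocksMeeting B C)
  rw [hN, card_empty, hTD.card_blocksMeeting hg₁ hg₂ h₁₂ hA,
    hTD.card_blocksMeeting hg₂ hg₁ h₁₂.symm hA', hTD.card_blocksMeeting hg₃ hg₁ h₁₃.symm hC,
    hTD.card_blocksMeeting_inter hg₁ hg₂ h₁₂ hA hA',
    hTD.card_blocksMeeting_inter hg₁ hg₃ h₁₃ hA hC,
    hTD.card_blocksMeeting_inter hg₂ hg₃ h₂₃ hA' hC,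
    ← blocksMeeting_union, ← blocksMeeting_union] at hMF
  have hB := hTD.card_blocks hg₁ hg₂ h₁₂
  have hk' : k ≤ #(B \ blocksMeeting B (A ∪ A' ∪ C)) := by
    rw [card_sdiff_of_subset (blocksMeeting_subset _ _)]
    apply Nat.le_sub_of_add_le
    linarith
  obtain ⟨S, hSF, rfl⟩ := exists_subset_card_eq hk'
  refine ⟨S, hSF.trans sdiff_subset, rfl, ?_⟩
  rw [← hF, ← hTD.card_points]
  exact card_sup_add_card_le hSF

theorem exists_nine_blocks_card_sup_le (hTD : IsTransversalDesign 3 4 Gr B) :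
    ∃ S ⊆ B, #S = 9 ∧ #(S.sup id) ≤ 10 := by
  obtain ⟨g₁, g₂, g₃, h₁₂, h₁₃, h₂₃, rfl⟩ := card_eq_three.1 hTD.card_groups
  obtain ⟨p, hp⟩ := card_pos.1 (by rw [hTD.group_card g₁ (by simp)]; norm_num : 0 < #g₁)
  obtain ⟨q, hq⟩ := card_pos.1 (by rw [hTD.group_card g₂ (by simp)]; norm_num : 0 < #g₂)
  obtain ⟨S, hSB, hS, hSU⟩ := hTD.exists_card_sup_add_le (by simp) (by simp) (by simp)
    h₁₂ h₁₃ h₂₃ (singleton_subset_iff.2 hp) (singleton_subset_iff.2 hq) (empty_subset g₃)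
    (by rw [blocksMeeting_empty, inter_empty]) (k := 9) (by simp)
  exact ⟨S, hSB, hS, by simpa using hSU⟩

theorem exists_ten_blocks_card_sup_le (hTD : IsTransversalDesign 3 5 Gr B) :
    ∃ S ⊆ B, #S = 10 ∧ #(S.sup id) ≤ 11 := by
  obtain ⟨g₁, g₂, g₃, h₁₂, h₁₃, h₂₃, rfl⟩ := card_eq_three.1 hTD.card_groups
  have hg₁ : g₁ ∈ ({g₁, g₂, g₃} : Finset _) := by simp
  have hg₂ : g₂ ∈ ({g₁, g₂, g₃} : Finset _) := by simp
  have hg₃ : g₃ ∈ ({g₁, g₂, g₃} : Finset _) := by simp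
  obtain ⟨p, hp, p', hp', hpp'⟩ :=
    one_lt_card.1 (by rw [hTD.group_card g₁ hg₁]; norm_num : 1 < #g₁)
  obtain ⟨q, hq⟩ := card_pos.1 (by rw [hTD.group_card g₂ hg₂]; norm_num : 0 < #g₂)
  have hA : {p, p'} ⊆ g₁ := insert_subset hp (singleton_subset_iff.2 hp')
  -- only two blocks meet both `{p, p'}` and `{q}`, so some point of the third group avoids them
  obtain ⟨t, ht, hN⟩ := hTD.exists_mem_inter_blocksMeeting_eq_empty hg₃
    (X := blocksMeeting B {p, p'} ∩ blocksMeeting B {q})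
    (by rw [hTD.card_blocksMeeting_inter hg₁ hg₂ h₁₂ hA (singleton_subset_iff.2 hq),
      card_pair hpp']; norm_num)
  obtain ⟨S, hSB, hS, hSU⟩ := hTD.exists_card_sup_add_le hg₁ hg₂ hg₃ h₁₂ h₁₃ h₂₃ hA
    (singleton_subset_iff.2 hq) (singleton_subset_iff.2 ht) hN (k := 10)
    (by simp [card_pair hpp'])
  exact ⟨S, hSB, hS, by simpa [card_pair hpp'] using hSU⟩

end IsTransversalDesign

end

/-- For a `TD(3,5)`: any `i` distinct blocks, `1 ≤ i ≤ 9`, cover at least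
`i + 2` points, and there exist `10` distinct blocks covering at most `11`
points.  Likewise, for a `TD(3,4)`: any `i` distinct blocks, `1 ≤ i ≤ 8`,
cover at least `i + 2` points, and there exist `9` distinct blocks covering
at most `10` points. -/
theorem td3_small_ecbc_batch_parameters
    {P₁ : Type*} [Fintype P₁] [DecidableEq P₁]
    (Gr₁ B₁ : Finset (Finset P₁)) (hTD₁ : IsTransversalDesign 3 5 Gr₁ B₁)
    {P₂ : Type*} [Fintype P₂] [DecidableEq P₂]
    (Gr₂ B₂ : Finset (Finset P₂)) (hTD₂ : IsTransversalDesign 3 4 Gr₂ B₂) :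
    ((∀ S : Finset (Finset P₁), S ⊆ B₁ → 1 ≤ S.card → S.card ≤ 9 →
        S.card + 2 ≤ (S.sup id).card) ∧
      (∃ S : Finset (Finset P₁), S ⊆ B₁ ∧ S.card = 10 ∧
        (S.sup id).card ≤ 11)) ∧
    ((∀ S : Finset (Finset P₂), S ⊆ B₂ → 1 ≤ S.card → S.card ≤ 8 →
        S.card + 2 ≤ (S.sup id).card) ∧
      (∃ S : Finset (Finset P₂), S ⊆ B₂ ∧ S.card = 9 ∧
        (S.sup id).card ≤ 10)) :=
  ⟨⟨fun _ hS h₁ h₉ => hTD₁.card_add_two_le_card_sup le_rfl hS h₁ h₉,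
      hTD₁.exists_ten_blocks_card_sup_le⟩,
    ⟨fun _ hS h₁ h₈ => hTD₂.card_add_two_le_card_sup (by norm_num) hS h₁ h₈,
      hTD₂.exists_nine_blocks_card_sup_le⟩⟩
end
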